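/- arXiv:1505.01585 — 5 statements merged into one kernel-verified Lean document; each statement's English description precedes it below -/
import Mathlib

section
/- Let Y ~ N(θ, σ²) with σ > 0 and let λ = √τ for some τ ≥ 1. Then E[(Y² − σ²)·1{Y² ≤ σ²τ}] = (θ² )·[Φ̃(−λ − θ/σ) − Φ̃(λ − θ/σ)] + φ(λ + θ/σ)·(−σ²λ + σθ) + φ(λ − θ/σ)·(−σ²λ − σθ), where φ and Φ̃ denote the standard normal density and survival function respectively. -/
/-!
Write `Y = σ Z + θ` with `Z` standard normal. The event `Y² ≤ σ² τ` becomes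
`Z ∈ [-√τ - θ/σ, √τ - θ/σ]`, and `((σ z + θ)² - σ²) φ(z) = σ² (z² - 1) φ(z) + 2 σ θ z φ(z) + θ² φ(z)`.
Since `φ' = -z φ`, the three terms have antiderivatives `-z φ(z)`, `-φ(z)` and `-Φ̃(z)`.
-/

open MeasureTheory ProbabilityTheory

/-- Standard normal density. -/
noncomputable def stdPhi (z : ℝ) : ℝ := (Real.sqrt (2 * Real.pi))⁻¹ * Real.exp (-z ^ 2 / 2)

/-- Standard normal survival function. -/
noncomputable def stdSurv (z : ℝ) : ℝ := ∫ u in Set.Ioi z, stdPhi u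

open Set

lemma gaussianPDFReal_zero_one : gaussianPDFReal 0 1 = stdPhi := by
  ext z
  simp [gaussianPDFReal_def, stdPhi]

lemma continuous_stdPhi : Continuous stdPhi := by unfold stdPhi; fun_prop

lemma integrable_stdPhi : Integrable stdPhi := by
  rw [← gaussianPDFReal_zero_one]; exact integrable_gaussianPDFReal 0 1

lemma stdPhi_neg (z : ℝ) : stdPhi (-z) = stdPhi z := by simp [stdPhi]

lemma hasDerivAt_stdPhi (z : ℝ) : HasDerivAt stdPhi (-z * stdPhi z) z :=
  (((hasDerivAt_pow 2 z).neg.div_const 2).exp.const_mul _).congr_deriv <| by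
    simp only [stdPhi, Pi.neg_apply]; push_cast; ring

lemma gaussianReal_eq_map_affine (θ σ : ℝ) :
    gaussianReal θ (σ ^ 2).toNNReal = (gaussianReal 0 1).map (fun z => σ * z + θ) := by
  have hcomp : (fun z => σ * z + θ) = (· + θ) ∘ (σ * ·) := rfl
  rw [hcomp, ← Measure.map_map (measurable_add_const θ) (measurable_const_mul σ),
    gaussianReal_map_const_mul, gaussianReal_map_add_const]
  congr 1
  · simp
  · ext; simp [sq_nonneg]

lemma integral_gaussianReal_eq_integral_stdPhi {E : Type*} [NormedAddCommGroup E]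
    [NormedSpace ℝ E] (f : ℝ → E) (θ : ℝ) {σ : ℝ} (hσ : σ ≠ 0) :
    ∫ y, f y ∂gaussianReal θ (σ ^ 2).toNNReal = ∫ z, stdPhi z • f (σ * z + θ) := by
  let e : ℝ ≃ᵐ ℝ := ((Homeomorph.mulLeft₀ σ hσ).trans (Homeomorph.addRight θ)).toMeasurableEquiv
  rw [gaussianReal_eq_map_affine, show (fun z => σ * z + θ) = e from rfl, integral_map_equiv,
    integral_gaussianReal_eq_integral_smul one_ne_zero, gaussianPDFReal_zero_one]
  rfl

lemma integral_stdPhi (a b : ℝ) : ∫ z in a..b, stdPhi z = stdSurv a - stdSurv b :=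
  (intervalIntegral.integral_Ioi_sub_Ioi' integrable_stdPhi.integrableOn
    integrable_stdPhi.integrableOn).symm

lemma integral_mul_stdPhi (a b : ℝ) : ∫ z in a..b, z * stdPhi z = stdPhi a - stdPhi b := by
  have hcont : Continuous fun z => z * stdPhi z := continuous_id.mul continuous_stdPhi
  rw [intervalIntegral.integral_eq_sub_of_hasDerivAt (f := fun z => -stdPhi z)
    (fun z _ => (hasDerivAt_stdPhi z).neg.congr_deriv (by ring)) (hcont.intervalIntegrable a b)]
  ring

lemma integral_sq_sub_one_mul_stdPhi (a b : ℝ) :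
    ∫ z in a..b, (z ^ 2 - 1) * stdPhi z = a * stdPhi a - b * stdPhi b := by
  have hcont : Continuous fun z => (z ^ 2 - 1) * stdPhi z := by
    have hφ := continuous_stdPhi
    fun_prop
  have hderiv (z : ℝ) : HasDerivAt (fun z => -(z * stdPhi z)) ((z ^ 2 - 1) * stdPhi z) z :=
    ((hasDerivAt_id z).mul (hasDerivAt_stdPhi z)).neg.congr_deriv (by simp only [id]; ring)
  rw [intervalIntegral.integral_eq_sub_of_hasDerivAt (fun z _ => hderiv z)
    (hcont.intervalIntegrable a b)]
  ring

lemma integral_sq_affine_sub_mul_stdPhi (σ θ a b : ℝ) :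
    ∫ z in a..b, ((σ * z + θ) ^ 2 - σ ^ 2) * stdPhi z =
      σ ^ 2 * (a * stdPhi a - b * stdPhi b) + 2 * σ * θ * (stdPhi a - stdPhi b) +
        θ ^ 2 * (stdSurv a - stdSurv b) := by
  have hφ := continuous_stdPhi
  have hsplit : (fun z => ((σ * z + θ) ^ 2 - σ ^ 2) * stdPhi z) = fun z =>
      σ ^ 2 * ((z ^ 2 - 1) * stdPhi z) + 2 * σ * θ * (z * stdPhi z) + θ ^ 2 * stdPhi z := by
    ext z; ring
  rw [hsplit, intervalIntegral.integral_add, intervalIntegral.integral_add,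
    intervalIntegral.integral_const_mul, intervalIntegral.integral_const_mul,
    intervalIntegral.integral_const_mul, integral_sq_sub_one_mul_stdPhi, integral_mul_stdPhi,
    integral_stdPhi]
  all_goals exact Continuous.intervalIntegrable (by fun_prop) a b

lemma sq_mul_add_le_mul_iff {σ τ : ℝ} (θ z : ℝ) (hσ : 0 < σ) (hτ : 0 ≤ τ) :
    (σ * z + θ) ^ 2 ≤ σ ^ 2 * τ ↔ z ∈ Icc (-√τ - θ / σ) (√τ - θ / σ) := by
  have hfactor : (σ * z + θ) ^ 2 = σ ^ 2 * (z + θ / σ) ^ 2 := by field_simp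
  rw [hfactor, mul_le_mul_iff_right₀ (by positivity), Real.sq_le hτ, mem_Icc]
  constructor <;> rintro ⟨h₁, h₂⟩ <;> constructor <;> linarith

theorem stmt0 (σ θ τ : ℝ) (hσ : 0 < σ) (hτ : 1 ≤ τ) :
    (∫ y, (if y ^ 2 ≤ σ ^ 2 * τ then y ^ 2 - σ ^ 2 else 0)
        ∂(gaussianReal θ (σ ^ 2).toNNReal)) =
      θ ^ 2 * (stdSurv (-Real.sqrt τ - θ / σ) - stdSurv (Real.sqrt τ - θ / σ)) +
        stdPhi (Real.sqrt τ + θ / σ) * (-σ ^ 2 * Real.sqrt τ + σ * θ) +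
        stdPhi (Real.sqrt τ - θ / σ) * (-σ ^ 2 * Real.sqrt τ - σ * θ) := by
  have hτ₀ : 0 ≤ τ := by linarith
  have hab : -√τ - θ / σ ≤ √τ - θ / σ := by linarith [Real.sqrt_nonneg τ]
  have hindicator : (fun z => stdPhi z • if (σ * z + θ) ^ 2 ≤ σ ^ 2 * τ
      then (σ * z + θ) ^ 2 - σ ^ 2 else 0) =
      (Icc (-√τ - θ / σ) (√τ - θ / σ)).indicator
        (fun z => ((σ * z + θ) ^ 2 - σ ^ 2) * stdPhi z) := by
    ext z
    simp only [smul_eq_mul, indicator_apply, sq_mul_add_le_mul_iff θ z hσ hτ₀]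
    split_ifs <;> ring
  rw [integral_gaussianReal_eq_integral_stdPhi _ _ hσ.ne', hindicator,
    integral_indicator measurableSet_Icc, integral_Icc_eq_integral_Ioc,
    ← intervalIntegral.integral_of_le hab, integral_sq_affine_sub_mul_stdPhi,
    show -√τ - θ / σ = -(√τ + θ / σ) by ring, stdPhi_neg]
  field_simp
  ring
end

section
/- Let Y ~ N(0, σ²) with σ > 0 and τ ≥ 1. Then E[(Y² − σ²)·1{Y² ≤ σ²τ}] = −2σ²√τ·φ(√τ), where φ is the standard normal density. -/
open MeasureTheory ProbabilityTheory

/-!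
The Gaussian density `p` of variance `v` satisfies `p' x = -((x - μ) / v) p x`, so
`((x - μ)² - v) p x` is the derivative of `-v (x - μ) p x`. Integrating over `[μ - r, μ + r]`
leaves only the boundary term `-2 v r p (μ + r)`, and at `r = σ √τ` the density equals
`φ(√τ) / σ`.
-/

open Real Set NNReal

namespace ProbabilityTheory

variable {μ : ℝ} {v : ℝ≥0}

lemma gaussianPDFReal_eq_stdPhi (x : ℝ) :
    gaussianPDFReal μ v x = stdPhi ((x - μ) / √v) / √v := by
  rcases eq_or_ne v 0 with rfl | hv
  · simp
  have hv' : (0 : ℝ) < v := by positivity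
  rw [gaussianPDFReal, stdPhi, div_pow, sq_sqrt hv'.le, sqrt_mul (by positivity)]
  field_simp

lemma gaussianPDFReal_sub_eq_add (r : ℝ) :
    gaussianPDFReal μ v (μ - r) = gaussianPDFReal μ v (μ + r) := by
  simp only [gaussianPDFReal, sub_sub_cancel_left, add_sub_cancel_left, neg_sq]

lemma hasDerivAt_gaussianPDFReal (x : ℝ) :
    HasDerivAt (gaussianPDFReal μ v) (-((x - μ) / v) * gaussianPDFReal μ v x) x := by
  rw [gaussianPDFReal_def]
  refine ((((hasDerivAt_id' x).sub_const μ).fun_pow 2).fun_neg.div_const (2 * (v : ℝ))).exp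
    |>.const_mul (√(2 * π * v))⁻¹ |>.congr_deriv ?_
  field_simp
  ring

lemma hasDerivAt_mul_gaussianPDFReal (hv : v ≠ 0) (x : ℝ) :
    HasDerivAt (fun x ↦ -v * ((x - μ) * gaussianPDFReal μ v x))
      (((x - μ) ^ 2 - v) * gaussianPDFReal μ v x) x := by
  refine (((hasDerivAt_id' x).sub_const μ).mul (hasDerivAt_gaussianPDFReal x)).const_mul
    (-(v : ℝ)) |>.congr_deriv ?_
  field_simp
  ring

@[fun_prop]
lemma continuous_gaussianPDFReal : Continuous (gaussianPDFReal μ v) := by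
  unfold gaussianPDFReal
  fun_prop

lemma intervalIntegral_sq_sub_var_mul_gaussianPDFReal (hv : v ≠ 0) (a b : ℝ) :
    ∫ x in a..b, ((x - μ) ^ 2 - v) * gaussianPDFReal μ v x =
      v * ((a - μ) * gaussianPDFReal μ v a - (b - μ) * gaussianPDFReal μ v b) := by
  have hcont : Continuous fun x ↦ ((x - μ) ^ 2 - v) * gaussianPDFReal μ v x := by fun_prop
  rw [intervalIntegral.integral_eq_sub_of_hasDerivAt
    (fun x _ ↦ hasDerivAt_mul_gaussianPDFReal hv x) (hcont.intervalIntegrable _ _)]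
  ring

lemma integral_gaussianReal_ite_sq_sub_var (hv : v ≠ 0) {r : ℝ} (hr : 0 ≤ r) :
    ∫ x, (if (x - μ) ^ 2 ≤ r ^ 2 then (x - μ) ^ 2 - v else 0) ∂gaussianReal μ v =
      -2 * v * r * gaussianPDFReal μ v (μ + r) := by
  have hmem : ∀ x, (x - μ) ^ 2 ≤ r ^ 2 ↔ x ∈ Icc (μ - r) (μ + r) := fun x ↦ by
    rw [sq_le_sq, abs_of_nonneg hr, abs_sub_le_iff, mem_Icc]
    constructor <;> rintro ⟨h₁, h₂⟩ <;> constructor <;> linarith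
  have hind :
      (fun x ↦ gaussianPDFReal μ v x • if (x - μ) ^ 2 ≤ r ^ 2 then (x - μ) ^ 2 - v else 0) =
        (Icc (μ - r) (μ + r)).indicator fun x ↦ ((x - μ) ^ 2 - v) * gaussianPDFReal μ v x := by
    ext x
    simp only [hmem, indicator_apply, smul_eq_mul, mul_ite, mul_comm, zero_mul]
  rw [integral_gaussianReal_eq_integral_smul hv, hind, integral_indicator measurableSet_Icc,
    integral_Icc_eq_integral_Ioc, ← intervalIntegral.integral_of_le (by linarith),
    intervalIntegral_sq_sub_var_mul_gaussianPDFReal hv, gaussianPDFReal_sub_eq_add]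
  ring

end ProbabilityTheory

theorem stmt1 (σ τ : ℝ) (hσ : 0 < σ) (hτ : 1 ≤ τ) :
    (∫ y, (if y ^ 2 ≤ σ ^ 2 * τ then y ^ 2 - σ ^ 2 else 0)
        ∂(gaussianReal 0 (σ ^ 2).toNNReal)) =
      -2 * σ ^ 2 * Real.sqrt τ * stdPhi (Real.sqrt τ) := by
  have hτ₀ : 0 ≤ τ := zero_le_one.trans hτ
  have hv : (σ ^ 2).toNNReal ≠ 0 := by simp [hσ.ne']
  have hvσ : ((σ ^ 2).toNNReal : ℝ) = σ ^ 2 := Real.coe_toNNReal _ (sq_nonneg σ)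
  have key := integral_gaussianReal_ite_sq_sub_var (μ := 0) hv (mul_nonneg hσ.le (sqrt_nonneg τ))
  rw [hvσ, mul_pow, sq_sqrt hτ₀, gaussianPDFReal_eq_stdPhi, hvσ, sqrt_sq hσ.le] at key
  simp only [sub_zero, zero_add] at key
  rw [key, mul_div_cancel_left₀ _ hσ.ne']
  field_simp
end

section
/- Let M be a hypergeometric random variable with P(M = m) = C(q,m)·C(k−q, q−m)/C(k,q) for 0 ≤ m ≤ q (drawing q items from k with q marked), and let t > 0. Then E[e^{tM}] ≤ (1 − q/k + (q/k)e^t)^q. -/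
/-!
Write `e^t = 1 + y` with `y ≥ 0` and expand both sides in powers of `y`: the coefficient of
`y^j` is the `j`-th binomial moment `E[C(M, j)]`, which equals `C(q,j)² / C(k,j)` for the
hypergeometric `M` and `C(q,j) (q/k)^j` for `Binomial(q, q/k)`. So it suffices to compare these
termwise, i.e. `C(q,j) / C(k,j) = ∏_{i<j} (q-i)/(k-i) ≤ (q/k)^j`.
-/

open Finset

theorem Nat.descFactorial_mul_pow_le_descFactorial_mul_pow {q k : ℕ} (hqk : q ≤ k) (j : ℕ) :
    q.descFactorial j * k ^ j ≤ k.descFactorial j * q ^ j := by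
  induction j with
  | zero => simp
  | succ j ih =>
    have hstep : (q - j) * k ≤ (k - j) * q := by
      rw [Nat.sub_mul, Nat.sub_mul, mul_comm q k]
      exact Nat.sub_le_sub_left (Nat.mul_le_mul_left j hqk) _
    calc q.descFactorial (j + 1) * k ^ (j + 1)
        = ((q - j) * k) * (q.descFactorial j * k ^ j) := by
          rw [Nat.descFactorial_succ, pow_succ]; ring
      _ ≤ ((k - j) * q) * (k.descFactorial j * q ^ j) := Nat.mul_le_mul hstep ih
      _ = k.descFactorial (j + 1) * q ^ (j + 1) := by
          rw [Nat.descFactorial_succ, pow_succ]; ring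

theorem Nat.choose_mul_pow_le_choose_mul_pow {q k : ℕ} (hqk : q ≤ k) (j : ℕ) :
    q.choose j * k ^ j ≤ k.choose j * q ^ j := by
  have h := Nat.descFactorial_mul_pow_le_descFactorial_mul_pow hqk j
  rw [Nat.descFactorial_eq_factorial_mul_choose, Nat.descFactorial_eq_factorial_mul_choose,
    mul_assoc, mul_assoc] at h
  exact Nat.le_of_mul_le_mul_left h j.factorial_pos

theorem Nat.choose_div_choose_le_div_pow {q k : ℕ} (hqk : q ≤ k) (j : ℕ) :
    (q.choose j : ℝ) / k.choose j ≤ ((q : ℝ) / k) ^ j := by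
  rcases k.eq_zero_or_pos with rfl | hk
  · obtain rfl : q = 0 := Nat.le_zero.mp hqk
    cases j <;> simp
  rcases (k.choose j).eq_zero_or_pos with hkj | hkj
  · rw [hkj, Nat.cast_zero, div_zero]
    positivity
  rw [div_pow, div_le_div_iff₀ (by exact_mod_cast hkj) (by positivity),
    mul_comm _ (k.choose j : ℝ)]
  exact_mod_cast Nat.choose_mul_pow_le_choose_mul_pow hqk j

theorem Nat.sum_choose_mul_choose_mul_choose {a b n j : ℕ} (hja : j ≤ a) (hjn : j ≤ n) :
    ∑ m ∈ range (n + 1), a.choose m * b.choose (n - m) * m.choose j =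
      a.choose j * (a + b - j).choose (n - j) := by
  rw [show n + 1 = j + (n - j + 1) by omega, sum_range_add,
    sum_eq_zero fun m hm => by simp [Nat.choose_eq_zero_of_lt (mem_range.1 hm)], zero_add,
    show a + b - j = (a - j) + b by omega, Nat.add_choose_eq,
    Nat.sum_antidiagonal_eq_sum_range_succ_mk, mul_sum]
  refine sum_congr rfl fun i _ => ?_
  have h := Nat.choose_mul (n := a) (le_add_right j i : j ≤ j + i)
  rw [Nat.add_sub_cancel_left] at h
  rw [show n - (j + i) = n - j - i by omega, mul_right_comm, h, mul_assoc]

theorem one_add_pow_eq_sum_range_choose_mul_pow {R : Type*} [CommSemiring R] (y : R)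
    {m n : ℕ} (hmn : m ≤ n) :
    (1 + y) ^ m = ∑ j ∈ range (n + 1), (m.choose j : R) * y ^ j := by
  rw [add_comm, add_pow, ← sum_range_add_sum_Ico _ (by omega : m + 1 ≤ n + 1),
    sum_eq_zero (s := Ico _ _) fun j hj => by
      simp [Nat.choose_eq_zero_of_lt (mem_Ico.1 hj).1]]
  simp only [one_pow, mul_one, add_zero, mul_comm]

theorem sum_mul_one_add_pow_le_of_sum_mul_choose_le {n : ℕ} {p : ℕ → ℝ} {r y : ℝ}
    (hy : 0 ≤ y)
    (h : ∀ j ≤ n, ∑ m ∈ range (n + 1), p m * m.choose j ≤ n.choose j * r ^ j) :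
    ∑ m ∈ range (n + 1), p m * (1 + y) ^ m ≤ (1 + r * y) ^ n := calc
  ∑ m ∈ range (n + 1), p m * (1 + y) ^ m
      = ∑ j ∈ range (n + 1), (∑ m ∈ range (n + 1), p m * m.choose j) * y ^ j := by
        simp_rw [sum_mul, mul_assoc]
        rw [sum_comm]
        refine sum_congr rfl fun m hm => ?_
        rw [one_add_pow_eq_sum_range_choose_mul_pow y (Nat.lt_succ_iff.1 (mem_range.1 hm)),
          mul_sum]
    _ ≤ ∑ j ∈ range (n + 1), n.choose j * r ^ j * y ^ j :=
        sum_le_sum fun j hj => mul_le_mul_of_nonneg_right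
          (h j (Nat.lt_succ_iff.1 (mem_range.1 hj))) (pow_nonneg hy j)
    _ = (1 + r * y) ^ n := by
        simp_rw [one_add_pow_eq_sum_range_choose_mul_pow (r * y) le_rfl, mul_pow, mul_assoc]

theorem sum_hypergeometric_mul_choose_le {k q j : ℕ} (hqk : q ≤ k) (hjq : j ≤ q) :
    ∑ m ∈ range (q + 1), (q.choose m * (k - q).choose (q - m) : ℝ) / k.choose q * m.choose j ≤
      q.choose j * ((q : ℝ) / k) ^ j := by
  have hkq : (k.choose q : ℝ) ≠ 0 := by exact_mod_cast (Nat.choose_pos hqk).ne'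
  have hkj : (k.choose j : ℝ) ≠ 0 := by
    exact_mod_cast (Nat.choose_pos (hjq.trans hqk)).ne'
  have hmoment : ∑ m ∈ range (q + 1), (q.choose m * (k - q).choose (q - m) : ℝ) / k.choose q *
      m.choose j = q.choose j * (q.choose j / k.choose j) := by
    have hsum : ∑ m ∈ range (q + 1), (q.choose m * (k - q).choose (q - m) * m.choose j : ℝ) =
        q.choose j * (k - j).choose (q - j) := by
      have h := Nat.sum_choose_mul_choose_mul_choose (b := k - q) hjq hjq
      rw [Nat.add_sub_cancel' hqk] at h
      exact_mod_cast h
    have hmul : (k.choose q * q.choose j : ℝ) = k.choose j * (k - j).choose (q - j) := by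
      exact_mod_cast Nat.choose_mul hjq
    simp_rw [div_mul_eq_mul_div, ← sum_div]
    field_simp
    rw [hsum]
    linear_combination (-(q.choose j : ℝ)) * hmul
  rw [hmoment]
  exact mul_le_mul_of_nonneg_left (Nat.choose_div_choose_le_div_pow hqk j) (Nat.cast_nonneg _)

theorem stmt11_general (k q : ℕ) (hqk : q ≤ k) (t : ℝ) (ht : 0 < t) :
    (∑ m ∈ Finset.range (q + 1),
        ((q.choose m * (k - q).choose (q - m) : ℝ) / (k.choose q : ℝ)) *
          Real.exp (t * m)) ≤
      (1 - (q : ℝ) / k + (q : ℝ) / k * Real.exp t) ^ q := by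
  set y := Real.exp t - 1
  have hy : 0 ≤ y := sub_nonneg.2 (Real.one_le_exp ht.le)
  have hexp (m : ℕ) : Real.exp (t * m) = (1 + y) ^ m := by
    rw [add_sub_cancel, mul_comm, Real.exp_nat_mul]
  have hbase : 1 - (q : ℝ) / k + (q : ℝ) / k * Real.exp t = 1 + (q : ℝ) / k * y := by ring
  simp_rw [hexp, hbase]
  exact sum_mul_one_add_pow_le_of_sum_mul_choose_le hy fun j hj =>
    sum_hypergeometric_mul_choose_le hqk hj

theorem stmt11 (k q : ℕ) (hq : 1 ≤ q) (hqk : q ≤ k) (t : ℝ) (ht : 0 < t) :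
    (∑ m ∈ Finset.range (q + 1),
        ((q.choose m * (k - q).choose (q - m) : ℝ) / (k.choose q : ℝ)) *
          Real.exp (t * m)) ≤
      (1 - (q : ℝ) / k + (q : ℝ) / k * Real.exp t) ^ q :=
  stmt11_general k q hqk t ht
end

section
/- (Constrained Risk Inequality) Let P_f and P_g be two probability distributions on a measurable space with densities f, g relative to a dominating measure, with chi-square affinity ξ = ∫g²/f < ∞, and let θ_f, θ_g be two real parameter values associated with f, g. Then for any estimator δ(X), max{E_f(δ(X) − θ_f)², E_g(δ(X) − θ_g)²} ≥ (θ_g − θ_f)²/(1 + ξ^{1/2})². -/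
/-!
With `A = E_g (δ - θ_f)` and `B = E_g (δ - θ_g)` we have `A - B = θ_g - θ_f`.
Cauchy–Schwarz with weight `g` gives `B² ≤ E_g (δ - θ_g)²`, and writing
`A = E_f [(δ - θ_f) g / f]`, Cauchy–Schwarz with weight `f` gives `A² ≤ ξ E_f (δ - θ_f)²`.
Hence `|θ_g - θ_f| ≤ |A| + |B| ≤ (1 + √ξ) √(max of the two risks)`.
-/

open MeasureTheory

namespace MeasureTheory

variable {α : Type*} [MeasurableSpace α] {μ : Measure α}

section Weighted

variable {u v w : α → ℝ}

theorem integrable_mul_mul_of_integrable_sq_mul (hu : AEMeasurable u μ) (hv : AEMeasurable v μ)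
    (hw : AEMeasurable w μ) (hw0 : 0 ≤ᵐ[μ] w)
    (hu2 : Integrable (fun x => u x ^ 2 * w x) μ) (hv2 : Integrable (fun x => v x ^ 2 * w x) μ) :
    Integrable (fun x => u x * v x * w x) μ := by
  refine ((hu2.add hv2).div_const 2).mono' ((hu.mul hv).mul hw).aestronglyMeasurable ?_
  filter_upwards [hw0] with x (hx : 0 ≤ w x)
  rw [Real.norm_eq_abs, abs_mul, abs_mul, abs_of_nonneg hx]
  simp only [Pi.add_apply]
  nlinarith [mul_nonneg (sq_nonneg (|u x| - |v x|)) hx, sq_abs (u x), sq_abs (v x)]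

theorem sq_integral_mul_mul_le (hu : AEMeasurable u μ) (hv : AEMeasurable v μ)
    (hw : AEMeasurable w μ) (hw0 : 0 ≤ᵐ[μ] w)
    (hu2 : Integrable (fun x => u x ^ 2 * w x) μ) (hv2 : Integrable (fun x => v x ^ 2 * w x) μ) :
    (∫ x, u x * v x * w x ∂μ) ^ 2 ≤ (∫ x, u x ^ 2 * w x ∂μ) * ∫ x, v x ^ 2 * w x ∂μ := by
  have huv := integrable_mul_mul_of_integrable_sq_mul hu hv hw hw0 hu2 hv2
  have hquad : ∀ t : ℝ, 0 ≤ (∫ x, v x ^ 2 * w x ∂μ) * (t * t)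
      + (2 * ∫ x, u x * v x * w x ∂μ) * t + ∫ x, u x ^ 2 * w x ∂μ := by
    intro t
    have hexpand : ∫ x, (u x + t * v x) ^ 2 * w x ∂μ = (∫ x, v x ^ 2 * w x ∂μ) * (t * t)
        + (2 * ∫ x, u x * v x * w x ∂μ) * t + ∫ x, u x ^ 2 * w x ∂μ := by
      have hsplit : (fun x => (u x + t * v x) ^ 2 * w x) = fun x =>
          (t * t) * (v x ^ 2 * w x) + (2 * t) * (u x * v x * w x) + u x ^ 2 * w x := by
        funext x; ring
      have hlin : Integrable (fun x => (t * t) * (v x ^ 2 * w x) + (2 * t) * (u x * v x * w x)) μ :=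
        (hv2.const_mul _).add (huv.const_mul _)
      rw [hsplit, integral_add hlin hu2, integral_add (hv2.const_mul _) (huv.const_mul _),
        integral_const_mul, integral_const_mul]
      ring
    rw [← hexpand]
    exact integral_nonneg_of_ae <| by
      filter_upwards [hw0] with x hx using mul_nonneg (sq_nonneg _) hx
  have := discrim_le_zero hquad
  rw [discrim] at this
  nlinarith

theorem integrable_mul_of_integrable_sq_mul (hu : AEMeasurable u μ) (hw : AEMeasurable w μ)
    (hw0 : 0 ≤ᵐ[μ] w) (hu2 : Integrable (fun x => u x ^ 2 * w x) μ) (hwi : Integrable w μ) :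
    Integrable (fun x => u x * w x) μ := by
  simpa using integrable_mul_mul_of_integrable_sq_mul (v := fun _ => 1) hu aemeasurable_const hw
    hw0 hu2 (by simpa using hwi)

theorem sq_integral_mul_le (hu : AEMeasurable u μ) (hw : AEMeasurable w μ) (hw0 : 0 ≤ᵐ[μ] w)
    (hu2 : Integrable (fun x => u x ^ 2 * w x) μ) (hwi : Integrable w μ) :
    (∫ x, u x * w x ∂μ) ^ 2 ≤ (∫ x, u x ^ 2 * w x ∂μ) * ∫ x, w x ∂μ := by
  simpa using sq_integral_mul_mul_le (v := fun _ => 1) hu aemeasurable_const hw hw0 hu2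
    (by simpa using hwi)

end Weighted

section ChangeOfWeight

variable {u f g : α → ℝ}

theorem sq_div_mul_ae_eq (hf0 : ∀ᵐ x ∂μ, 0 < f x) :
    (fun x => (g x / f x) ^ 2 * f x) =ᵐ[μ] fun x => g x ^ 2 / f x := by
  filter_upwards [hf0] with x hx
  field_simp

theorem mul_div_mul_ae_eq (hf0 : ∀ᵐ x ∂μ, 0 < f x) :
    (fun x => u x * (g x / f x) * f x) =ᵐ[μ] fun x => u x * g x := by
  filter_upwards [hf0] with x hx
  field_simp

theorem integrable_mul_of_integrable_sq_div (hu : AEMeasurable u μ) (hf : AEMeasurable f μ)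
    (hg : AEMeasurable g μ) (hf0 : ∀ᵐ x ∂μ, 0 < f x)
    (hu2 : Integrable (fun x => u x ^ 2 * f x) μ) (hg2 : Integrable (fun x => g x ^ 2 / f x) μ) :
    Integrable (fun x => u x * g x) μ :=
  (integrable_mul_mul_of_integrable_sq_mul (v := fun x => g x / f x) hu (hg.div hf)
    hf (hf0.mono fun _ hx => hx.le) hu2 (hg2.congr (sq_div_mul_ae_eq hf0).symm)).congr
    (mul_div_mul_ae_eq hf0)

theorem sq_integral_mul_le_of_sq_div (hu : AEMeasurable u μ) (hf : AEMeasurable f μ)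
    (hg : AEMeasurable g μ) (hf0 : ∀ᵐ x ∂μ, 0 < f x)
    (hu2 : Integrable (fun x => u x ^ 2 * f x) μ) (hg2 : Integrable (fun x => g x ^ 2 / f x) μ) :
    (∫ x, u x * g x ∂μ) ^ 2 ≤ (∫ x, u x ^ 2 * f x ∂μ) * ∫ x, g x ^ 2 / f x ∂μ := by
  have := sq_integral_mul_mul_le (v := fun x => g x / f x) hu (hg.div hf) hf
    (hf0.mono fun _ hx => hx.le) hu2 (hg2.congr (sq_div_mul_ae_eq hf0).symm)
  rwa [integral_congr_ae (mul_div_mul_ae_eq hf0), integral_congr_ae (sq_div_mul_ae_eq hf0)] at this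

end ChangeOfWeight

end MeasureTheory

theorem sq_sub_div_one_add_sqrt_sq_le_max {a b r s ξ : ℝ} (ha : a ^ 2 ≤ r * ξ) (hb : b ^ 2 ≤ s)
    (hξ : 0 ≤ ξ) : (a - b) ^ 2 / (1 + √ξ) ^ 2 ≤ max r s := by
  set M := max r s
  have hM : 0 ≤ M := (sq_nonneg b).trans (hb.trans (le_max_right r s))
  have hA : |a| ≤ √M * √ξ := by
    rw [← Real.sqrt_mul' M hξ]
    exact Real.abs_le_sqrt (ha.trans (mul_le_mul_of_nonneg_right (le_max_left r s) hξ))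
  have hB : |b| ≤ √M := Real.abs_le_sqrt (hb.trans (le_max_right r s))
  have hab : |a - b| ≤ √M * (1 + √ξ) := by
    calc |a - b| ≤ |a| + |b| := abs_sub a b
      _ ≤ √M * √ξ + √M := add_le_add hA hB
      _ = √M * (1 + √ξ) := by ring
  rw [div_le_iff₀ (by positivity), ← sq_abs, ← Real.sq_sqrt hM, ← mul_pow]
  exact pow_le_pow_left₀ (abs_nonneg _) hab 2

theorem stmt15_general {α : Type*} [MeasurableSpace α] (μ : Measure α)
    (f g : α → ℝ) (hf : Measurable f) (hg : Measurable g)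
    (hf0 : ∀ᵐ x ∂μ, 0 < f x) (hg0 : ∀ x, 0 ≤ g x)
    (hgi : Integrable g μ)
    (hg1 : ∫ x, g x ∂μ = 1)
    (hchi : Integrable (fun x => (g x) ^ 2 / f x) μ)
    (δ : α → ℝ) (hδ : Measurable δ) (θf θg : ℝ)
    (hrf : Integrable (fun x => (δ x - θf) ^ 2 * f x) μ)
    (hrg : Integrable (fun x => (δ x - θg) ^ 2 * g x) μ) :
    (θg - θf) ^ 2 / (1 + Real.sqrt (∫ x, (g x) ^ 2 / f x ∂μ)) ^ 2 ≤
      max (∫ x, (δ x - θf) ^ 2 * f x ∂μ) (∫ x, (δ x - θg) ^ 2 * g x ∂μ) := by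
  have hu_f := (hδ.sub_const θf).aemeasurable (μ := μ)
  have hu_g := (hδ.sub_const θg).aemeasurable (μ := μ)
  have hg0' : 0 ≤ᵐ[μ] g := .of_forall hg0
  have hA := sq_integral_mul_le_of_sq_div hu_f hf.aemeasurable hg.aemeasurable hf0 hrf hchi
  have hB := sq_integral_mul_le hu_g hg.aemeasurable hg0' hrg hgi
  rw [hg1, mul_one] at hB
  have hdiff : ∫ x, (δ x - θf) * g x ∂μ - ∫ x, (δ x - θg) * g x ∂μ = θg - θf := by
    rw [← integral_sub
      (integrable_mul_of_integrable_sq_div hu_f hf.aemeasurable hg.aemeasurable hf0 hrf hchi)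
      (integrable_mul_of_integrable_sq_mul hu_g hg.aemeasurable hg0' hrg hgi)]
    simp only [← sub_mul, sub_sub_sub_cancel_left, integral_const_mul, hg1, mul_one]
  rw [← hdiff]
  exact sq_sub_div_one_add_sqrt_sq_le_max hA hB
    (integral_nonneg_of_ae <| by filter_upwards [hf0] with x hx using by positivity)

/-- The Constrained Risk Inequality of Brown and Low (1996). -/
theorem stmt15 {α : Type*} [MeasurableSpace α] (μ : Measure α) [SigmaFinite μ]
    (f g : α → ℝ) (hf : Measurable f) (hg : Measurable g)
    (hf0 : ∀ᵐ x ∂μ, 0 < f x) (hg0 : ∀ x, 0 ≤ g x)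
    (hfi : Integrable f μ) (hgi : Integrable g μ)
    (hf1 : ∫ x, f x ∂μ = 1) (hg1 : ∫ x, g x ∂μ = 1)
    (hchi : Integrable (fun x => (g x) ^ 2 / f x) μ)
    (δ : α → ℝ) (hδ : Measurable δ) (θf θg : ℝ)
    (hrf : Integrable (fun x => (δ x - θf) ^ 2 * f x) μ)
    (hrg : Integrable (fun x => (δ x - θg) ^ 2 * g x) μ) :
    (θg - θf) ^ 2 / (1 + Real.sqrt (∫ x, (g x) ^ 2 / f x ∂μ)) ^ 2 ≤
      max (∫ x, (δ x - θf) ^ 2 * f x ∂μ) (∫ x, (δ x - θg) ^ 2 * g x ∂μ) :=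
  stmt15_general μ f g hf hg hf0 hg0 hgi hg1 hchi δ hδ θf θg hrf hrg
end

section
/- Let Y ~ N(θ, σ²) with σ > 0 and τ ≥ 1, and set θ₀ = E[((Z² − σ²τ)₊)] for Z ~ N(0, σ²). Then the function B(θ) = E[(Y² − σ²τ)₊] − θ₀ is nonnegative for all θ ∈ ℝ, is even in θ, and satisfies (E[(Y² − σ²τ)₊ − θ₀])² ≤ max{6σ²θ² + σ⁴(4√τ + 18)e^{−τ/2}, 10θ⁴}. -/
/-
Write `G y = (y² - c)₊` with `c = σ²τ ≥ 0` and `v = σ²`. Since `G` is even and convex and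
`N(θ, v)` is the law of `Z + θ` for a symmetric `Z ~ N(0, v)`, reflecting `Z` gives
`B(-θ) = B(θ)`, and averaging `G(Z + θ)` and `G(Z - θ)` gives `E G(Z) ≤ E G(Z + θ)`, i.e. `B ≥ 0`.

If `θ² ≤ v`, write `B = E[G(Z) (L(Z) - 1)]` with `L` the likelihood ratio of `N(θ, v)` to
`N(0, v)`. By Cauchy–Schwarz, `B² ≤ E[Z⁴] E[(L - 1)²] = 3v² (exp (θ²/v) - 1) ≤ 6vθ²`.
If `θ² ≥ v`, simply `0 ≤ B ≤ E[Y²] = v + θ² ≤ 2θ²`.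
-/

open MeasureTheory ProbabilityTheory

/-- The bias function `B(θ) = E_θ[(Y² − σ²τ)₊] − E_0[(Y² − σ²τ)₊]`. -/
noncomputable def Bfun (σ τ θ : ℝ) : ℝ :=
  (∫ y, max (y ^ 2 - σ ^ 2 * τ) 0 ∂(gaussianReal θ (σ ^ 2).toNNReal)) -
    ∫ y, max (y ^ 2 - σ ^ 2 * τ) 0 ∂(gaussianReal 0 (σ ^ 2).toNNReal)

open Real Set
open scoped NNReal

namespace MeasureTheory

lemma sq_integral_mul_le_s19 {α : Type*} [MeasurableSpace α] {μ : Measure α} {f g : α → ℝ}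
    (hf : MemLp f 2 μ) (hg : MemLp g 2 μ) :
    (∫ x, f x * g x ∂μ) ^ 2 ≤ (∫ x, f x ^ 2 ∂μ) * ∫ x, g x ^ 2 ∂μ := by
  have inner_toLp : ∀ {u w : α → ℝ} (hu : MemLp u 2 μ) (hw : MemLp w 2 μ),
      inner ℝ (hu.toLp u) (hw.toLp w) = ∫ x, u x * w x ∂μ := by
    intro u w hu hw
    rw [L2.inner_def]
    refine integral_congr_ae ?_
    filter_upwards [hu.coeFn_toLp, hw.coeFn_toLp] with x hux hwx
    simp [hux, hwx, mul_comm]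
  simpa only [inner_toLp, ← sq] using real_inner_mul_inner_self_le (hf.toLp f) (hg.toLp g)

end MeasureTheory

namespace ProbabilityTheory

variable {v : ℝ≥0}

lemma integrable_pow_gaussianReal (μ : ℝ) (n : ℕ) :
    Integrable (fun x ↦ x ^ n) (gaussianReal μ v) :=
  integrable_pow_of_mem_interior_integrableExpSet (X := fun x ↦ x) (by simp) n

lemma integral_gaussianReal_neg_of_even {f : ℝ → ℝ} (hf : ∀ x, f (-x) = f x) (μ : ℝ) :
    ∫ x, f x ∂gaussianReal (-μ) v = ∫ x, f x ∂gaussianReal μ v := by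
  rw [← gaussianReal_map_neg]
  exact (integral_map_equiv (MeasurableEquiv.neg ℝ) f).trans (by simp [hf])

lemma integral_gaussianReal_eq_integral_comp_add (f : ℝ → ℝ) (μ : ℝ) :
    ∫ x, f x ∂gaussianReal μ v = ∫ x, f (x + μ) ∂gaussianReal 0 v := by
  conv_lhs => rw [← zero_add μ, ← gaussianReal_map_add_const]
  exact integral_map_equiv (MeasurableEquiv.addRight μ) f

lemma integrable_comp_add_of_integrable_gaussianReal {f : ℝ → ℝ} {μ : ℝ}
    (hf : Integrable f (gaussianReal μ v)) : Integrable (fun x ↦ f (x + μ)) (gaussianReal 0 v) := by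
  rw [← zero_add μ, ← gaussianReal_map_add_const] at hf
  exact (integrable_map_equiv (MeasurableEquiv.addRight μ) f).1 hf

lemma integral_gaussianReal_zero_le_of_convexOn_of_even {f : ℝ → ℝ} (hconv : ConvexOn ℝ univ f)
    (heven : ∀ x, f (-x) = f x) (h0 : Integrable f (gaussianReal 0 v)) {θ : ℝ}
    (hθ : Integrable f (gaussianReal θ v)) (hnegθ : Integrable f (gaussianReal (-θ) v)) :
    ∫ x, f x ∂gaussianReal 0 v ≤ ∫ x, f x ∂gaussianReal θ v := by
  have midpoint : ∀ x, f x ≤ (f (x + θ) + f (x + -θ)) / 2 := by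
    intro x
    calc f x = f ((1 / 2 : ℝ) • (x + θ) + (1 / 2 : ℝ) • (x + -θ)) := by
          simp only [smul_eq_mul]; ring_nf
      _ ≤ (1 / 2 : ℝ) • f (x + θ) + (1 / 2 : ℝ) • f (x + -θ) :=
          hconv.2 (mem_univ _) (mem_univ _) (by norm_num) (by norm_num) (by norm_num)
      _ = (f (x + θ) + f (x + -θ)) / 2 := by simp only [smul_eq_mul]; ring
  calc ∫ x, f x ∂gaussianReal 0 v
      ≤ ∫ x, (f (x + θ) + f (x + -θ)) / 2 ∂gaussianReal 0 v :=
        integral_mono h0 (((integrable_comp_add_of_integrable_gaussianReal hθ).add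
          (integrable_comp_add_of_integrable_gaussianReal hnegθ)).div_const 2) midpoint
    _ = (∫ x, f x ∂gaussianReal θ v + ∫ x, f x ∂gaussianReal (-θ) v) / 2 := by
        rw [integral_div, integral_add (integrable_comp_add_of_integrable_gaussianReal hθ)
          (integrable_comp_add_of_integrable_gaussianReal hnegθ),
          integral_gaussianReal_eq_integral_comp_add f θ, integral_gaussianReal_eq_integral_comp_add f (-θ)]
    _ = ∫ x, f x ∂gaussianReal θ v := by
        rw [integral_gaussianReal_neg_of_even heven]; ring

lemma integral_sq_gaussianReal (μ : ℝ) : ∫ x, x ^ 2 ∂gaussianReal μ v = v + μ ^ 2 := by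
  have h := variance_eq_sub (memLp_id_gaussianReal (μ := μ) (v := v) 2)
  simp only [variance_id_gaussianReal, Pi.pow_apply, id, integral_id_gaussianReal] at h
  linarith

lemma hasDerivAt_mul_exp_mul_sq_div_two (a : ℝ) {p : ℝ → ℝ} {p' t : ℝ} (hp : HasDerivAt p p' t) :
    HasDerivAt (fun t ↦ p t * rexp (a * t ^ 2 / 2))
      ((p' + a * t * p t) * rexp (a * t ^ 2 / 2)) t := by
  have hE : HasDerivAt (fun t ↦ rexp (a * t ^ 2 / 2)) (rexp (a * t ^ 2 / 2) * (a * t)) t := by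
    convert (((hasDerivAt_pow 2 t).const_mul a).div_const 2).exp using 1
    ring
  exact (hp.fun_mul hE).congr_deriv (by ring)

lemma integral_pow_four_gaussianReal_zero : ∫ x, x ^ 4 ∂gaussianReal 0 v = 3 * v ^ 2 := by
  have h := iteratedDeriv_mgf_zero (X := fun x ↦ x) (μ := gaussianReal 0 v) (by simp) 4
  simp only [mgf_fun_id_gaussianReal, zero_mul, zero_add, Pi.pow_apply] at h
  rw [← h]
  have d1 : deriv (fun t ↦ rexp (v * t ^ 2 / 2)) = fun t ↦ v * t * rexp (v * t ^ 2 / 2) := by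
    ext t
    simpa using (hasDerivAt_mul_exp_mul_sq_div_two v (hasDerivAt_const t (1 : ℝ))).deriv
  have d2 : deriv (fun t ↦ v * t * rexp (v * t ^ 2 / 2)) =
      fun t ↦ (v + v ^ 2 * t ^ 2) * rexp (v * t ^ 2 / 2) := by
    ext t
    refine (hasDerivAt_mul_exp_mul_sq_div_two v
      ((hasDerivAt_id' t).const_mul (v : ℝ))).deriv.trans ?_
    ring
  have d3 : deriv (fun t ↦ (v + v ^ 2 * t ^ 2) * rexp (v * t ^ 2 / 2)) =
      fun t ↦ (3 * v ^ 2 * t + v ^ 3 * t ^ 3) * rexp (v * t ^ 2 / 2) := by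
    ext t
    refine (hasDerivAt_mul_exp_mul_sq_div_two v
      (((hasDerivAt_pow 2 t).const_mul ((v : ℝ) ^ 2)).const_add (v : ℝ))).deriv.trans ?_
    ring
  have d4 : deriv (fun t ↦ (3 * v ^ 2 * t + v ^ 3 * t ^ 3) * rexp (v * t ^ 2 / 2)) 0 =
      3 * (v : ℝ) ^ 2 := by
    refine (hasDerivAt_mul_exp_mul_sq_div_two v (((hasDerivAt_id' (0 : ℝ)).const_mul
      (3 * (v : ℝ) ^ 2)).fun_add ((hasDerivAt_pow 3 (0 : ℝ)).const_mul ((v : ℝ) ^ 3)))).deriv.trans ?_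
    simp
  simp only [iteratedDeriv_succ', iteratedDeriv_zero, d1, d2, d3, d4]

noncomputable def gaussianLikelihoodRatio (v : ℝ≥0) (θ x : ℝ) : ℝ :=
  rexp (θ / v * x - θ ^ 2 / (2 * v))

lemma gaussianPDFReal_eq_mul_likelihoodRatio (hv : v ≠ 0) (θ x : ℝ) :
    gaussianPDFReal θ v x = gaussianPDFReal 0 v x * gaussianLikelihoodRatio v θ x := by
  have hv' : (v : ℝ) ≠ 0 := by exact_mod_cast hv
  simp only [gaussianPDFReal, gaussianLikelihoodRatio, mul_assoc, ← exp_add]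
  congr 2
  field_simp
  ring

lemma integral_gaussianReal_eq_integral_mul_likelihoodRatio (hv : v ≠ 0) (f : ℝ → ℝ) (θ : ℝ) :
    ∫ x, f x ∂gaussianReal θ v = ∫ x, f x * gaussianLikelihoodRatio v θ x ∂gaussianReal 0 v := by
  simp only [integral_gaussianReal_eq_integral_smul hv, gaussianPDFReal_eq_mul_likelihoodRatio hv θ,
    smul_eq_mul]
  congr 1 with x
  ring

lemma gaussianLikelihoodRatio_pow (v : ℝ≥0) (θ x : ℝ) (n : ℕ) :
    gaussianLikelihoodRatio v θ x ^ n = rexp (-(n * θ ^ 2 / (2 * v))) * rexp (n * θ / v * x) := by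
  rw [gaussianLikelihoodRatio, ← exp_nat_mul, ← exp_add]
  ring_nf

lemma integrable_gaussianLikelihoodRatio_pow (v : ℝ≥0) (θ μ : ℝ) (n : ℕ) :
    Integrable (fun x ↦ gaussianLikelihoodRatio v θ x ^ n) (gaussianReal μ v) := by
  simp only [gaussianLikelihoodRatio_pow]
  exact (integrable_exp_mul_gaussianReal _).const_mul _

lemma memLp_gaussianLikelihoodRatio (v : ℝ≥0) (θ μ : ℝ) :
    MemLp (gaussianLikelihoodRatio v θ) 2 (gaussianReal μ v) :=
  (memLp_two_iff_integrable_sq (by unfold gaussianLikelihoodRatio; fun_prop)).2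
    (integrable_gaussianLikelihoodRatio_pow v θ μ 2)

lemma integral_gaussianLikelihoodRatio (hv : v ≠ 0) (θ : ℝ) :
    ∫ x, gaussianLikelihoodRatio v θ x ∂gaussianReal 0 v = 1 := by
  simpa using (integral_gaussianReal_eq_integral_mul_likelihoodRatio hv (fun _ ↦ 1) θ).symm

lemma integral_gaussianLikelihoodRatio_sq (hv : v ≠ 0) (θ : ℝ) :
    ∫ x, gaussianLikelihoodRatio v θ x ^ 2 ∂gaussianReal 0 v = rexp (θ ^ 2 / v) := by
  have hv' : (v : ℝ) ≠ 0 := by exact_mod_cast hv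
  have hmgf := congrFun (mgf_fun_id_gaussianReal (μ := 0) (v := v)) (2 * θ / v)
  simp only [mgf] at hmgf
  simp only [gaussianLikelihoodRatio_pow, Nat.cast_ofNat]
  rw [integral_const_mul, hmgf, ← exp_add]
  congr 1
  field_simp
  ring

lemma integral_sq_gaussianLikelihoodRatio_sub_one (hv : v ≠ 0) (θ : ℝ) :
    ∫ x, (gaussianLikelihoodRatio v θ x - 1) ^ 2 ∂gaussianReal 0 v = rexp (θ ^ 2 / v) - 1 := by
  have h := variance_eq_sub (memLp_gaussianLikelihoodRatio v θ 0)
  rw [variance_eq_integral (memLp_gaussianLikelihoodRatio v θ 0).aemeasurable] at h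
  simpa [integral_gaussianLikelihoodRatio hv, integral_gaussianLikelihoodRatio_sq hv] using h

lemma sq_integral_gaussianReal_sub_le (hv : v ≠ 0) {f : ℝ → ℝ} (hf : MemLp f 2 (gaussianReal 0 v))
    (θ : ℝ) :
    (∫ x, f x ∂gaussianReal θ v - ∫ x, f x ∂gaussianReal 0 v) ^ 2 ≤
      (∫ x, f x ^ 2 ∂gaussianReal 0 v) * (rexp (θ ^ 2 / v) - 1) := by
  have hL := memLp_gaussianLikelihoodRatio v θ 0
  have hfL : Integrable (fun x ↦ f x * gaussianLikelihoodRatio v θ x) (gaussianReal 0 v) :=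
    hf.integrable_mul hL
  have hdiff : ∫ x, f x ∂gaussianReal θ v - ∫ x, f x ∂gaussianReal 0 v =
      ∫ x, f x * (gaussianLikelihoodRatio v θ x - 1) ∂gaussianReal 0 v := by
    rw [integral_gaussianReal_eq_integral_mul_likelihoodRatio hv,
      ← integral_sub hfL (hf.integrable one_le_two)]
    simp only [mul_sub, mul_one]
  rw [hdiff, ← integral_sq_gaussianLikelihoodRatio_sub_one hv θ]
  exact sq_integral_mul_le_s19 hf (hL.sub (memLp_const 1))

end ProbabilityTheory

section TruncatedSquare

variable {v : ℝ≥0} {c : ℝ}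

lemma convexOn_max_sq_sub_const (c : ℝ) : ConvexOn ℝ univ fun y : ℝ ↦ max (y ^ 2 - c) 0 :=
  (even_two.convexOn_pow.sub (concaveOn_const c convex_univ)).sup (convexOn_const 0 convex_univ)

lemma max_sq_sub_const_le_sq (hc : 0 ≤ c) (y : ℝ) : max (y ^ 2 - c) 0 ≤ y ^ 2 :=
  max_le (by linarith) (sq_nonneg y)

lemma max_sq_sub_const_sq_le_pow_four (hc : 0 ≤ c) (y : ℝ) : max (y ^ 2 - c) 0 ^ 2 ≤ y ^ 4 :=
  (pow_le_pow_left₀ (le_max_right _ _) (max_sq_sub_const_le_sq hc y) 2).trans_eq (by ring)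

lemma memLp_max_sq_sub_const_gaussianReal (hc : 0 ≤ c) (μ : ℝ) :
    MemLp (fun y : ℝ ↦ max (y ^ 2 - c) 0) 2 (gaussianReal μ v) := by
  refine (memLp_two_iff_integrable_sq (by fun_prop)).2 <|
    (integrable_pow_gaussianReal μ 4).mono' (by fun_prop) (ae_of_all _ fun y ↦ ?_)
  rw [Real.norm_of_nonneg (sq_nonneg _)]
  exact max_sq_sub_const_sq_le_pow_four hc y

lemma integrable_max_sq_sub_const_gaussianReal (hc : 0 ≤ c) (μ : ℝ) :
    Integrable (fun y : ℝ ↦ max (y ^ 2 - c) 0) (gaussianReal μ v) :=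
  (memLp_max_sq_sub_const_gaussianReal hc μ).integrable one_le_two

lemma integral_max_sq_sub_const_gaussianReal_zero_le (hc : 0 ≤ c) (θ : ℝ) :
    ∫ y, max (y ^ 2 - c) 0 ∂gaussianReal 0 v ≤ ∫ y, max (y ^ 2 - c) 0 ∂gaussianReal θ v :=
  integral_gaussianReal_zero_le_of_convexOn_of_even (convexOn_max_sq_sub_const c)
    (fun y ↦ by rw [neg_sq]) (integrable_max_sq_sub_const_gaussianReal hc 0)
    (integrable_max_sq_sub_const_gaussianReal hc θ)
    (integrable_max_sq_sub_const_gaussianReal hc (-θ))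

lemma sq_integral_max_sq_sub_const_sub_le_of_sq_le (hv : v ≠ 0) (hc : 0 ≤ c) {θ : ℝ}
    (hθ : θ ^ 2 ≤ v) :
    (∫ y, max (y ^ 2 - c) 0 ∂gaussianReal θ v - ∫ y, max (y ^ 2 - c) 0 ∂gaussianReal 0 v) ^ 2 ≤
      6 * v * θ ^ 2 := by
  have hv' : (0 : ℝ) < v := by positivity
  have hx : θ ^ 2 / v ≤ 1 := (div_le_one hv').2 hθ
  have hfourth : ∫ y, max (y ^ 2 - c) 0 ^ 2 ∂gaussianReal 0 v ≤ 3 * v ^ 2 := by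
    rw [← integral_pow_four_gaussianReal_zero]
    exact integral_mono (memLp_max_sq_sub_const_gaussianReal hc 0).integrable_sq
      (integrable_pow_gaussianReal 0 4) (max_sq_sub_const_sq_le_pow_four hc)
  have hexp : rexp (θ ^ 2 / v) - 1 ≤ 2 * (θ ^ 2 / v) := by
    have h := abs_exp_sub_one_le (x := θ ^ 2 / v) (by rwa [abs_of_nonneg (by positivity)])
    rwa [abs_of_nonneg (sub_nonneg.2 (one_le_exp (by positivity))),
      abs_of_nonneg (by positivity)] at h
  calc _ ≤ (∫ y, max (y ^ 2 - c) 0 ^ 2 ∂gaussianReal 0 v) * (rexp (θ ^ 2 / v) - 1) :=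
        sq_integral_gaussianReal_sub_le hv (memLp_max_sq_sub_const_gaussianReal hc 0) θ
    _ ≤ 3 * v ^ 2 * (2 * (θ ^ 2 / v)) :=
        mul_le_mul hfourth hexp (sub_nonneg.2 (one_le_exp (by positivity))) (by positivity)
    _ = 6 * v * θ ^ 2 := by field_simp; ring

lemma sq_integral_max_sq_sub_const_sub_le_of_le_sq (hc : 0 ≤ c) {θ : ℝ} (hθ : (v : ℝ) ≤ θ ^ 2) :
    (∫ y, max (y ^ 2 - c) 0 ∂gaussianReal θ v - ∫ y, max (y ^ 2 - c) 0 ∂gaussianReal 0 v) ^ 2 ≤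
      4 * θ ^ 4 := by
  have hnonneg := sub_nonneg.2 (integral_max_sq_sub_const_gaussianReal_zero_le (v := v) hc θ)
  have h0 : 0 ≤ ∫ y, max (y ^ 2 - c) 0 ∂gaussianReal 0 v :=
    integral_nonneg fun y ↦ le_max_right _ _
  have hθ' : ∫ y, max (y ^ 2 - c) 0 ∂gaussianReal θ v ≤ v + θ ^ 2 :=
    (integral_mono (integrable_max_sq_sub_const_gaussianReal hc θ)
      (integrable_pow_gaussianReal θ 2) (max_sq_sub_const_le_sq hc)).trans_eq
      (integral_sq_gaussianReal θ)
  calc _ ≤ (2 * θ ^ 2) ^ 2 := pow_le_pow_left₀ hnonneg (by linarith) 2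
    _ = 4 * θ ^ 4 := by ring

end TruncatedSquare

theorem stmt19 (σ τ : ℝ) (hσ : 0 < σ) (hτ : 1 ≤ τ) (θ : ℝ) :
    0 ≤ Bfun σ τ θ ∧ Bfun σ τ (-θ) = Bfun σ τ θ ∧
      (Bfun σ τ θ) ^ 2 ≤
        max (6 * σ ^ 2 * θ ^ 2 + σ ^ 4 * (4 * Real.sqrt τ + 18) * Real.exp (-τ / 2))
          (10 * θ ^ 4) := by
  have hv : (σ ^ 2).toNNReal ≠ 0 := by simpa using hσ.ne'
  have hv' : ((σ ^ 2).toNNReal : ℝ) = σ ^ 2 := Real.coe_toNNReal _ (sq_nonneg σ)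
  have hc : 0 ≤ σ ^ 2 * τ := mul_nonneg (sq_nonneg σ) (by linarith)
  refine ⟨sub_nonneg.2 (integral_max_sq_sub_const_gaussianReal_zero_le hc θ), ?_, ?_⟩
  · unfold Bfun
    rw [integral_gaussianReal_neg_of_even fun y ↦ by rw [neg_sq]]
  rcases le_total (θ ^ 2) (σ ^ 2) with hθ | hθ
  · have hsmall := sq_integral_max_sq_sub_const_sub_le_of_sq_le hv hc (hv' ▸ hθ)
    have hslack : 0 ≤ σ ^ 4 * (4 * √τ + 18) * rexp (-τ / 2) := by positivity
    rw [hv'] at hsmall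
    exact le_max_of_le_left (by unfold Bfun; linarith)
  · have hlarge := sq_integral_max_sq_sub_const_sub_le_of_le_sq hc (hv'.symm ▸ hθ)
    have hθ4 : 0 ≤ θ ^ 4 := by positivity
    exact le_max_of_le_right (by unfold Bfun; linarith)
end
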